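/- Let K be an algebraically closed field of characteristic zero and V, W finite-dimensional K[x,y]-modules with associated Lie algebras L_V = K⟨P,Q⟩ ⋉ V and L_W = K⟨S,T⟩ ⋉ W. Suppose there is a Lie algebra isomorphism φ: L_V → L_W such that dim (φ(V)+W)/W = 1 and dim (φ(K⟨P,Q⟩)+W)/W = 1. Then V and W are weakly isomorphic K[x,y]-modules. -/

import Mathlib

/-- The bracket of the semidirect product `L_V = K⟨P,Q⟩ ⋉ V` on `(K × K) × V`. -/
def lieBk {K V : Type*} [Field K] [AddCommGroup V] [Module K V]
    (P Q : V →ₗ[K] V) (a b : (K × K) × V) : (K × K) × V :=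
  (0, (a.1.1 • P + a.1.2 • Q) b.2 - (b.1.1 • P + b.1.2 • Q) a.2)

/-- The abelian ideal `{0} ⊕ V` of `L_V`. -/
def vEmb (K V : Type*) [Field K] [AddCommGroup V] [Module K V] :
    Submodule K ((K × K) × V) :=
  (⊥ : Submodule K (K × K)).prod (⊤ : Submodule K V)

/-- The subalgebra `K⟨P,Q⟩ = K² ⊕ {0}` of `L_V`. -/
def pqEmb (K V : Type*) [Field K] [AddCommGroup V] [Module K V] :
    Submodule K ((K × K) × V) :=
  (⊤ : Submodule K (K × K)).prod (⊥ : Submodule K V)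

/-- Weak isomorphism of the `K[x,y]`-modules given by operator pairs `(P,Q)` and
`(S,T)`: some twist of `(S,T)` by an invertible 2×2 matrix is isomorphic to `(P,Q)`. -/
def WeakIso {K V W : Type*} [Field K] [AddCommGroup V] [Module K V]
    [AddCommGroup W] [Module K W] (P Q : V →ₗ[K] V) (S T : W →ₗ[K] W) : Prop :=
  ∃ M : Matrix (Fin 2) (Fin 2) K, IsUnit M ∧ ∃ e : V ≃ₗ[K] W,
    ∀ v, e (P v) = (M 0 0 • S + M 0 1 • T) (e v) ∧
         e (Q v) = (M 1 0 • S + M 1 1 • T) (e v)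

/-!
Write `φ (x, v) = (G x + F v, χ x + ψ v)`. The rank hypotheses say that `F = l ⊗ c` and
`G = μ ⊗ d` have rank one, and surjectivity of `φ` makes `c, d` a basis of `K²`. Pick
`z ∈ L_V` with `(φ z).1 = c`, `z.1 ≠ 0` and `(φ z).2` killed by `d • (S, T)`. Then `φ` maps
`(0, v) - l v • z` into `{0} ⊕ W`, and its `W`-component `e v` is injective in `v`, hence a
linear isomorphism `V ≃ W`. Bracketing `(0, v)` with `z` and with `(x₁, 0)`, where `G x₁ = d`,
shows that `e` intertwines `z.1 • (P, Q)` with `c • (S, T)` and `x₁ • (P, Q)` with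
`(d - ρ c) • (S, T)` for a scalar `ρ`; as `z.1, x₁` and `c, d - ρ c` are bases of `K²`,
this is a weak isomorphism.
-/

open Module

section LinearAlgebra

variable {K M N : Type*} [Field K] [AddCommGroup M] [Module K M] [AddCommGroup N] [Module K N]

theorem finrank_sup_ker [FiniteDimensional K M] (f : M →ₗ[K] N) (p : Submodule K M) :
    finrank K ↥(p ⊔ LinearMap.ker f) = finrank K ↥(p.map f) + finrank K ↥(LinearMap.ker f) := by
  have h := (f.domRestrict (p ⊔ LinearMap.ker f)).finrank_range_add_finrank_ker
  rwa [LinearMap.range_domRestrict, Submodule.map_sup, LinearMap.le_ker_iff_map.mp le_rfl,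
    sup_bot_eq, LinearMap.ker_domRestrict,
    (Submodule.comapSubtypeEquivOfLe (le_sup_right : LinearMap.ker f ≤ _)).finrank_eq,
    eq_comm] at h

theorem exists_eq_smul_of_finrank_range_eq_one {f : M →ₗ[K] N}
    (h : finrank K ↥(LinearMap.range f) = 1) :
    ∃ (l : M →ₗ[K] K) (c : N), Function.Surjective l ∧ ∀ m, f m = l m • c := by
  let b := Module.basisUnique Unit h
  refine ⟨b.coord () ∘ₗ f.rangeRestrict, b (), ?_, fun m => ?_⟩
  · have hb : Function.Surjective (b.coord ()) := fun t => ⟨t • b (), by simp⟩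
    simpa using hb.comp f.surjective_rangeRestrict
  · have := b.sum_repr (f.rangeRestrict m)
    rw [Fintype.sum_unique] at this
    simpa using congrArg Subtype.val this.symm

theorem linearIndependent_pair_of_forall_eq {c d : K × K}
    (h : ∀ y, ∃ s t : K, s • c + t • d = y) : LinearIndependent K ![c, d] := by
  refine linearIndependent_of_top_le_span_of_card_eq_finrank (fun y _ => ?_) (by simp)
  obtain ⟨s, t, rfl⟩ := h y
  exact Submodule.add_mem _ (Submodule.smul_mem _ _ (Submodule.subset_span ⟨0, rfl⟩))
    (Submodule.smul_mem _ _ (Submodule.subset_span ⟨1, rfl⟩))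

theorem linearIndependent_pair_of_map_eq_zero {u v : M} (f : M →ₗ[K] N) (hu : u ≠ 0)
    (hfu : f u = 0) (hfv : f v ≠ 0) : LinearIndependent K ![u, v] := by
  rw [LinearIndependent.pair_iff' hu]
  rintro a rfl
  simp [hfu] at hfv

theorem isUnit_of_linearIndependent_pair {u v : K × K} (h : LinearIndependent K ![u, v]) :
    IsUnit !![u.1, u.2; v.1, v.2] := by
  rw [← Matrix.linearIndependent_rows_iff_isUnit]
  have hrow :
      Matrix.row !![u.1, u.2; v.1, v.2] = (LinearEquiv.finTwoArrow K K).symm ∘ ![u, v] := by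
    ext i j
    fin_cases i <;> fin_cases j <;> rfl
  rw [hrow]
  exact h.map' _ (LinearEquiv.finTwoArrow K K).symm.ker

end LinearAlgebra

section OperatorPairs

variable {K V W : Type*} [Field K] [AddCommGroup V] [Module K V] [AddCommGroup W] [Module K W]

def opComb (P Q : Module.End K V) : (K × K) →ₗ[K] Module.End K V :=
  (LinearMap.fst K K K).smulRight P + (LinearMap.snd K K K).smulRight Q

@[simp]
theorem opComb_apply (P Q : Module.End K V) (a : K × K) : opComb P Q a = a.1 • P + a.2 • Q :=
  rfl

theorem weakIso_of_intertwining {P Q : Module.End K V} {S T : Module.End K W}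
    {x₀ x₁ y₀ y₁ : K × K} (hx : LinearIndependent K ![x₀, x₁])
    (hy : LinearIndependent K ![y₀, y₁]) (e : V ≃ₗ[K] W)
    (h₀ : ∀ v, e (opComb P Q x₀ v) = opComb S T y₀ (e v))
    (h₁ : ∀ v, e (opComb P Q x₁ v) = opComb S T y₁ (e v)) :
    WeakIso P Q S T := by
  set X : Matrix (Fin 2) (Fin 2) K := !![x₀.1, x₀.2; x₁.1, x₁.2]
  set Y : Matrix (Fin 2) (Fin 2) K := !![y₀.1, y₀.2; y₁.1, y₁.2]
  have hX := isUnit_of_linearIndependent_pair hx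
  have hinv : X⁻¹ * X = 1 := Matrix.nonsing_inv_mul X ((Matrix.isUnit_iff_isUnit_det X).1 hX)
  have key : ∀ i v, e (opComb P Q ((X⁻¹ * X) i 0, (X⁻¹ * X) i 1) v)
      = opComb S T ((X⁻¹ * Y) i 0, (X⁻¹ * Y) i 1) (e v) := by
    intro i v
    have hrow : ∀ (u₀ u₁ : K × K), ((X⁻¹ * !![u₀.1, u₀.2; u₁.1, u₁.2]) i 0,
        (X⁻¹ * !![u₀.1, u₀.2; u₁.1, u₁.2]) i 1) = X⁻¹ i 0 • u₀ + X⁻¹ i 1 • u₁ := by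
      intro u₀ u₁
      simp [Matrix.mul_apply, Fin.sum_univ_two, Prod.ext_iff, mul_comm]
    rw [hrow, hrow]
    simp only [map_add, map_smul, LinearMap.add_apply, LinearMap.smul_apply, h₀, h₁]
  refine ⟨X⁻¹ * Y, (Matrix.isUnit_nonsing_inv_iff.2 hX).mul
    (isUnit_of_linearIndependent_pair hy), e, fun v => ⟨?_, ?_⟩⟩
  · simpa [hinv] using key 0 v
  · simpa [hinv] using key 1 v

end OperatorPairs

section SemidirectIso

variable {K V W : Type*} [Field K] [AddCommGroup V] [Module K V] [AddCommGroup W] [Module K W]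
  {P Q : Module.End K V} {S T : Module.End K W} {φ : ((K × K) × V) ≃ₗ[K] ((K × K) × W)}

theorem lieBk_eq (P Q : Module.End K V) (a b : (K × K) × V) :
    lieBk P Q a b = (0, opComb P Q a.1 b.2 - opComb P Q b.1 a.2) :=
  rfl

theorem vEmb_eq_ker_fst : vEmb K W = LinearMap.ker (LinearMap.fst K (K × K) W) := by
  ext; simp [vEmb]

theorem range_inr_eq_vEmb : LinearMap.range (LinearMap.inr K (K × K) V) = vEmb K V := by
  ext x; simp [vEmb, Prod.ext_iff, eq_comm]

theorem range_inl_eq_pqEmb : LinearMap.range (LinearMap.inl K (K × K) V) = pqEmb K V := by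
  ext x; simp [pqEmb, Prod.ext_iff, eq_comm]

theorem exists_fst_map_eq_smul [FiniteDimensional K W] {U : Type*} [AddCommGroup U]
    [Module K U] (ι : U →ₗ[K] (K × K) × V)
    (h : finrank K ↥((LinearMap.range ι).map (φ : ((K × K) × V) →ₗ[K] (K × K) × W) ⊔ vEmb K W)
      = finrank K ↥(vEmb K W) + 1) :
    ∃ (l : U →ₗ[K] K) (c : K × K), Function.Surjective l ∧ ∀ u, (φ (ι u)).1 = l u • c := by
  rw [vEmb_eq_ker_fst, finrank_sup_ker, add_comm, add_left_cancel_iff, ← LinearMap.range_comp,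
    ← LinearMap.range_comp] at h
  exact exists_eq_smul_of_finrank_range_eq_one h

theorem fst_map_inr_opComb (hφ : ∀ a b, φ (lieBk P Q a b) = lieBk S T (φ a) (φ b))
    (x : K × K) (v : V) : (φ (0, opComb P Q x v)).1 = 0 := by
  have h : lieBk P Q (x, 0) (0, v) = (0, opComb P Q x v) := by simp [lieBk_eq]
  rw [← h, hφ]
  rfl

theorem opComb_map_inl_comm (hφ : ∀ a b, φ (lieBk P Q a b) = lieBk S T (φ a) (φ b))
    (x y : K × K) :
    opComb S T (φ (x, 0)).1 (φ (y, 0)).2 = opComb S T (φ (y, 0)).1 (φ (x, 0)).2 := by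
  have h0 : lieBk P Q (x, 0) (y, 0) = 0 := by simp [lieBk_eq]
  have h := congrArg Prod.snd (hφ (x, 0) (y, 0))
  rw [h0, map_zero] at h
  exact sub_eq_zero.1 h.symm

variable (φ) in
/-- When `(φ (0, v)).1 = l v • (φ z).1`, `φ` maps `(0, v) - l v • z` into `{0} ⊕ W`. -/
def transfer (l : V →ₗ[K] K) (z : (K × K) × V) : V →ₗ[K] W :=
  LinearMap.snd K (K × K) W ∘ₗ φ.toLinearMap ∘ₗ (LinearMap.inr K (K × K) V - l.smulRight z)

variable {l : V →ₗ[K] K} {z : (K × K) × V}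

theorem map_inr_eq_transfer (hl : ∀ v, (φ (0, v)).1 = l v • (φ z).1) (v : V) :
    φ (0, v) = (0, transfer φ l z v) + l v • φ z := by
  have h : φ ((0, v) - l v • z) = (0, transfer φ l z v) :=
    Prod.ext (by simp [hl]) rfl
  rw [← h, map_sub, map_smul, sub_add_cancel]

theorem transfer_injective (hl : ∀ v, (φ (0, v)).1 = l v • (φ z).1) (hz : z.1 ≠ 0) :
    Function.Injective (transfer φ l z) := by
  refine (injective_iff_map_eq_zero _).2 fun v hv => ?_
  have h := map_inr_eq_transfer hl v
  rw [hv, Prod.mk_zero_zero, zero_add, ← map_smul, φ.injective.eq_iff] at h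
  have hlv : l v = 0 := by
    simpa [hz] using (congrArg Prod.fst h).symm
  simpa [hlv] using congrArg Prod.snd h

theorem map_inr_opComb (hφ : ∀ a b, φ (lieBk P Q a b) = lieBk S T (φ a) (φ b))
    (hl : ∀ v, (φ (0, v)).1 = l v • (φ z).1) (hc : (φ z).1 ≠ 0) (x : K × K) (v : V) :
    φ (0, opComb P Q x v) = (0, transfer φ l z (opComb P Q x v)) := by
  have h := fst_map_inr_opComb hφ x v
  rw [hl, smul_eq_zero, or_iff_left hc] at h
  rw [map_inr_eq_transfer hl, h, zero_smul, add_zero]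

theorem transfer_opComb_fst (hφ : ∀ a b, φ (lieBk P Q a b) = lieBk S T (φ a) (φ b))
    (hl : ∀ v, (φ (0, v)).1 = l v • (φ z).1) (hc : (φ z).1 ≠ 0) (v : V) :
    transfer φ l z (opComb P Q z.1 v) = opComb S T (φ z).1 (transfer φ l z v) := by
  have h := hφ z (0, v)
  rw [map_inr_eq_transfer hl v] at h
  have hz : lieBk P Q z (0, v) = (0, opComb P Q z.1 v) := by simp [lieBk_eq]
  rw [hz, map_inr_opComb hφ hl hc] at h
  simpa only [lieBk_eq, Prod.fst_add, Prod.snd_add, Prod.smul_fst, Prod.smul_snd, zero_add,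
    map_add, map_smul, LinearMap.smul_apply, add_sub_cancel_right] using congrArg Prod.snd h

theorem transfer_opComb_inl (hφ : ∀ a b, φ (lieBk P Q a b) = lieBk S T (φ a) (φ b))
    (hl : ∀ v, (φ (0, v)).1 = l v • (φ z).1) (hc : (φ z).1 ≠ 0) (y : K × K) (v : V) :
    transfer φ l z (opComb P Q y v) =
      opComb S T (φ (y, 0)).1 (transfer φ l z v + l v • (φ z).2)
        - l v • opComb S T (φ z).1 (φ (y, 0)).2 := by
  have h := hφ (y, 0) (0, v)
  rw [map_inr_eq_transfer hl v] at h
  have hy : lieBk P Q (y, 0) (0, v) = (0, opComb P Q y v) := by simp [lieBk_eq]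
  rw [hy, map_inr_opComb hφ hl hc] at h
  simpa only [lieBk_eq, Prod.fst_add, Prod.snd_add, Prod.smul_fst, Prod.smul_snd, zero_add,
    map_zero, LinearMap.zero_apply, sub_zero, map_smul, LinearMap.smul_apply] using
    congrArg Prod.snd h

theorem smul_opComb_transfer_comm (hφ : ∀ a b, φ (lieBk P Q a b) = lieBk S T (φ a) (φ b))
    (hl : ∀ v, (φ (0, v)).1 = l v • (φ z).1) (u v : V) :
    l u • opComb S T (φ z).1 (transfer φ l z v) =
      l v • opComb S T (φ z).1 (transfer φ l z u) := by
  have h := hφ (0, u) (0, v)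
  rw [map_inr_eq_transfer hl u, map_inr_eq_transfer hl v] at h
  have h0 : lieBk P Q (0, u) (0, v) = 0 := by simp [lieBk_eq]
  rw [h0, map_zero] at h
  have h2 := congrArg Prod.snd h
  simp only [lieBk_eq, Prod.fst_add, Prod.snd_add, Prod.smul_fst, Prod.smul_snd, zero_add,
    map_add, map_smul, LinearMap.smul_apply, Prod.snd_zero] at h2
  linear_combination (norm := module) -h2

theorem weakIso_of_adapted [FiniteDimensional K V] [FiniteDimensional K W]
    (hφ : ∀ a b, φ (lieBk P Q a b) = lieBk S T (φ a) (φ b))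
    (hl : ∀ v, (φ (0, v)).1 = l v • (φ z).1) (hz : z.1 ≠ 0) (hz₁ : (φ (z.1, 0)).1 = 0)
    (hzW : ∀ y, opComb S T (φ (y, 0)).1 (φ z).2 = 0) {x₁ : K × K}
    (hcd : LinearIndependent K ![(φ z).1, (φ (x₁, 0)).1]) :
    WeakIso P Q S T := by
  have hc : (φ z).1 ≠ 0 := hcd.ne_zero 0
  have hdim : finrank K V = finrank K W := by
    have h := φ.finrank_eq
    simp only [Module.finrank_prod] at h
    omega
  let e := LinearMap.linearEquivOfInjective _ (transfer_injective hl hz) hdim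
  set ρ := l (e.symm (φ (x₁, 0)).2)
  refine weakIso_of_intertwining (y₁ := -ρ • (φ z).1 + (φ (x₁, 0)).1)
    (linearIndependent_pair_of_map_eq_zero
      (LinearMap.fst K (K × K) W ∘ₗ φ.toLinearMap ∘ₗ LinearMap.inl K (K × K) V) hz hz₁
      (hcd.ne_zero 1))
    ((LinearIndependent.pair_add_smul_right_iff _).2 hcd) e (transfer_opComb_fst hφ hl hc) ?_
  intro v
  have hρ := smul_opComb_transfer_comm hφ hl (e.symm (φ (x₁, 0)).2) v
  rw [show transfer φ l z (e.symm _) = _ from e.apply_symm_apply _] at hρ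
  change transfer φ l z (opComb P Q x₁ v) = opComb S T _ (transfer φ l z v)
  rw [transfer_opComb_inl hφ hl hc, map_add, map_smul, hzW, smul_zero, add_zero, ← hρ, map_add,
    map_smul, LinearMap.add_apply, LinearMap.smul_apply, neg_smul, sub_eq_neg_add]

theorem exists_adapted_point (hφ : ∀ a b, φ (lieBk P Q a b) = lieBk S T (φ a) (φ b))
    {c x₀ : K × K} {b : (K × K) × V} (hb : φ b = (c, 0)) (hb₁ : (φ (b.1, 0)).1 = 0)
    (hx₀ : x₀ ≠ 0) (hGx₀ : (φ (x₀, 0)).1 = 0) :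
    ∃ z : (K × K) × V, z.1 ≠ 0 ∧ (φ (z.1, 0)).1 = 0 ∧ (φ z).1 = c ∧
      ∀ y, opComb S T (φ (y, 0)).1 (φ z).2 = 0 := by
  by_cases h : b.1 = 0
  · refine ⟨b + (x₀, 0), by simpa [h], by simpa [h], by simp [hb, hGx₀], fun y => ?_⟩
    simp only [map_add, hb, Prod.snd_add, zero_add]
    rw [opComb_map_inl_comm hφ, hGx₀, map_zero, LinearMap.zero_apply]
  · exact ⟨b, h, hb₁, by rw [hb], fun y => by rw [hb, map_zero]⟩

theorem weakIso_of_rank_one [FiniteDimensional K V] [FiniteDimensional K W]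
    (hφ : ∀ a b, φ (lieBk P Q a b) = lieBk S T (φ a) (φ b))
    {μ : K × K →ₗ[K] K} {c d : K × K} (hl : ∀ v, (φ (0, v)).1 = l v • c)
    (hμ : Function.Surjective μ) (hG : ∀ x, (φ (x, 0)).1 = μ x • d) :
    WeakIso P Q S T := by
  have hsplit : ∀ x v, (φ (x, v)).1 = l v • c + μ x • d := fun x v => by
    rw [show ((x, v) : (K × K) × V) = (0, v) + (x, 0) by simp, map_add, Prod.fst_add, hl, hG]
  have hcd : LinearIndependent K ![c, d] := by
    refine linearIndependent_pair_of_forall_eq fun y => ?_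
    set b := φ.symm (y, 0)
    refine ⟨l b.2, μ b.1, ?_⟩
    rw [← hsplit, Prod.mk.eta, φ.apply_symm_apply]
  obtain ⟨x₀, hμx₀, hx₀⟩ := (Submodule.ne_bot_iff _).1 (LinearMap.ker_ne_bot_of_finrank_lt
    (f := μ) (by simp))
  obtain ⟨x₁, hx₁⟩ := hμ 1
  set b := φ.symm (c, 0)
  have hb₁ : μ b.1 = 0 := by
    have h := hsplit b.1 b.2
    rw [Prod.mk.eta, φ.apply_symm_apply] at h
    refine (LinearIndependent.pair_iff.1 hcd (l b.2 - 1) (μ b.1) ?_).2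
    rw [sub_smul, one_smul, sub_add_eq_add_sub, ← h, sub_self]
  obtain ⟨z, hz, hz₁, rfl, hzW⟩ := exists_adapted_point hφ (φ.apply_symm_apply (c, 0))
    (by rw [hG, hb₁, zero_smul]) hx₀ (by rw [hG, hμx₀, zero_smul])
  refine weakIso_of_adapted hφ hl hz hz₁ hzW (x₁ := x₁) ?_
  rwa [hG, hx₁, one_smul]

end SemidirectIso

theorem stmt_16_general {K V W : Type*} [Field K]
    [AddCommGroup V] [Module K V] [AddCommGroup W] [Module K W]
    [FiniteDimensional K V] [FiniteDimensional K W]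
    (P Q : V →ₗ[K] V) (S T : W →ₗ[K] W)
    (φ : ((K × K) × V) ≃ₗ[K] ((K × K) × W))
    (hφ : ∀ a b, φ (lieBk P Q a b) = lieBk S T (φ a) (φ b))
    (hV1 : Module.finrank K
        ↥((vEmb K V).map (φ : ((K × K) × V) →ₗ[K] (K × K) × W) ⊔ vEmb K W)
      = Module.finrank K ↥(vEmb K W) + 1)
    (hPQ1 : Module.finrank K
        ↥((pqEmb K V).map (φ : ((K × K) × V) →ₗ[K] (K × K) × W) ⊔ vEmb K W)
      = Module.finrank K ↥(vEmb K W) + 1) :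
    WeakIso P Q S T := by
  rw [← range_inr_eq_vEmb] at hV1
  rw [← range_inl_eq_pqEmb] at hPQ1
  obtain ⟨l, c, -, hl⟩ := exists_fst_map_eq_smul _ hV1
  obtain ⟨μ, d, hμ, hG⟩ := exists_fst_map_eq_smul _ hPQ1
  exact weakIso_of_rank_one hφ hl hμ hG

/-- Lemma 6: if a Lie algebra isomorphism φ : L_V → L_W satisfies
dim (φ(V)+W)/W = 1 and dim (φ(K⟨P,Q⟩)+W)/W = 1, then V and W are weakly
isomorphic. -/
theorem stmt_16 {K V W : Type*} [Field K] [IsAlgClosed K] [CharZero K]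
    [AddCommGroup V] [Module K V] [AddCommGroup W] [Module K W]
    [FiniteDimensional K V] [FiniteDimensional K W]
    (P Q : V →ₗ[K] V) (S T : W →ₗ[K] W)
    (hPQ : ∀ v, P (Q v) = Q (P v)) (hST : ∀ w, S (T w) = T (S w))
    (φ : ((K × K) × V) ≃ₗ[K] ((K × K) × W))
    (hφ : ∀ a b, φ (lieBk P Q a b) = lieBk S T (φ a) (φ b))
    (hV1 : Module.finrank K
        ↥((vEmb K V).map (φ : ((K × K) × V) →ₗ[K] (K × K) × W) ⊔ vEmb K W)
      = Module.finrank K ↥(vEmb K W) + 1)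
    (hPQ1 : Module.finrank K
        ↥((pqEmb K V).map (φ : ((K × K) × V) →ₗ[K] (K × K) × W) ⊔ vEmb K W)
      = Module.finrank K ↥(vEmb K W) + 1) :
    WeakIso P Q S T :=
  stmt_16_general P Q S T φ hφ hV1 hPQ1
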